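/- The projective duality *_P maps the subalgebra CGA₀ to itself and is an involution on it: for every A ∈ CGA₀, A^{*_P} ∈ CGA₀ and (A^{*_P})^{*_P} = A. -/

import Mathlib

/-!
Write `E₃` for the Euclidean Clifford algebra generated by `e₁, e₂, e₃` and `I₃ = e₁e₂e₃`.
Since `e₀² = 0` and `e₀ X = α(X) e₀` for `X ∈ E₃`, every `A ∈ CGA₀` has the form
`A₀ + e₀A₁` with `A₀, A₁ ∈ E₃`. One computes `-I_c = I₃(1 + e₀e∞)` and
`(A ∧ e∞)(-I_c) = A₀I₃e∞ + α(A₁)I₃`; as `♯` fixes `E₃` and sends `e∞` to `-e₀`, this gives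
`A^{*_P} = α(A₁)I₃ + e₀ α(A₀)I₃`. So `*_P` exchanges the two components through
`X ↦ α(X)I₃`, which is an involution because `α(α(X)I₃)I₃ = -X I₃² = X`.
-/

open CliffordAlgebra

/-- The matrix of the CGA inner product on `V = ℝ⁵`; indices `0, 1, 2, 3, 4`
correspond to the basis `e₀, e₁, e₂, e₃, e∞`. -/
def Bmat : Matrix (Fin 5) (Fin 5) ℝ :=
  !![0, 0, 0, 0, -1;
     0, 1, 0, 0, 0;
     0, 0, 1, 0, 0;
     0, 0, 0, 1, 0;
     -1, 0, 0, 0, 0]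

/-- The CGA quadratic form
`Q(a e₀ + x₁e₁ + x₂e₂ + x₃e₃ + b e∞) = x₁² + x₂² + x₃² − 2ab`. -/
noncomputable def Q : QuadraticForm ℝ (Fin 5 → ℝ) := Bmat.toQuadraticMap'

/-- The basis vectors of `V = ℝ⁵`: `e 0 = e₀`, `e 1, e 2, e 3` Euclidean, `e 4 = e∞`. -/
def e (i : Fin 5) : Fin 5 → ℝ := Pi.single i 1

/-- The linear map `♯ : V → V` fixing `e₁, e₂, e₃` and sending `e₀ ↦ -e∞`, `e∞ ↦ -e₀`. -/
def sharpV : (Fin 5 → ℝ) →ₗ[ℝ] (Fin 5 → ℝ) where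
  toFun v i := if i = 0 then -(v 4) else if i = 4 then -(v 0) else v i
  map_add' u v := by
    funext i
    by_cases h : i = 0 <;> by_cases h' : i = 4 <;> simp [h, h'] <;> ring
  map_smul' c v := by
    funext i
    by_cases h : i = 0 <;> by_cases h' : i = 4 <;> simp [h, h'] <;> ring

/-- Outer (wedge) product of a multivector with a vector:
`A ∧ v := ½ (A ι(v) + ι(v) α(A))`, where `α` is the grade involution. -/
noncomputable def wedgeVec (A : CliffordAlgebra Q) (v : Fin 5 → ℝ) : CliffordAlgebra Q :=
  (1 / 2 : ℝ) • (A * ι Q v + ι Q v * involute A)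

/-- The conformal pseudoscalar `I_c = (((e₀ ∧ e₁) ∧ e₂) ∧ e₃) ∧ e∞`. -/
noncomputable def Ic : CliffordAlgebra Q :=
  wedgeVec (wedgeVec (wedgeVec (wedgeVec (ι Q (e 0)) (e 1)) (e 2)) (e 3)) (e 4)

/-- The subalgebra `CGA₀` of CGA generated by `ι(e₀), ι(e₁), ι(e₂), ι(e₃)`. -/
noncomputable def CGA₀ : Subalgebra ℝ (CliffordAlgebra Q) :=
  Algebra.adjoin ℝ {ι Q (e 0), ι Q (e 1), ι Q (e 2), ι Q (e 3)}

/-- The projective (PGA) dual `A^{*_P} := ♯((A ∧ e∞) I_c⁻¹)`, with `I_c⁻¹ = -I_c`,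
expressed relative to a realization `F` of the involution `♯` on the Clifford algebra
(i.e. `F` is the algebra endomorphism induced by the isometry `♯ : V → V`,
characterized by `F (ι v) = ι (♯ v)`). -/
noncomputable def dualP (F : CliffordAlgebra Q →ₐ[ℝ] CliffordAlgebra Q)
    (A : CliffordAlgebra Q) : CliffordAlgebra Q :=
  F (wedgeVec A (e 4) * (-Ic))

section Orthogonal

variable {R M : Type*} [CommRing R] [AddCommGroup M] [Module R M] {q : QuadraticForm R M}
  {s : Set M} {x : CliffordAlgebra q}

theorem ι_mem_adjoin_ι_image {u : M} (hu : u ∈ s) : ι q u ∈ Algebra.adjoin R (ι q '' s) :=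
  Algebra.subset_adjoin (Set.mem_image_of_mem _ hu)

theorem involute_mem_adjoin_ι (hx : x ∈ Algebra.adjoin R (ι q '' s)) :
    involute x ∈ Algebra.adjoin R (ι q '' s) := by
  suffices h : Algebra.adjoin R (ι q '' s) ≤
      (Algebra.adjoin R (ι q '' s)).comap (involute (Q := q)) from h hx
  refine Algebra.adjoin_le ?_
  rintro _ ⟨u, hu, rfl⟩
  rw [SetLike.mem_coe, Subalgebra.mem_comap, involute_ι]
  exact neg_mem (ι_mem_adjoin_ι_image hu)

theorem ι_mul_eq_involute_mul_ι {v : M} (hv : ∀ u ∈ s, q.IsOrtho v u)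
    (hx : x ∈ Algebra.adjoin R (ι q '' s)) : ι q v * x = involute x * ι q v := by
  induction hx using Algebra.adjoin_induction with
  | mem _ h =>
    obtain ⟨u, hu, rfl⟩ := h
    rw [involute_ι, neg_mul, ι_mul_ι_comm_of_isOrtho (hv u hu)]
  | algebraMap r => rw [AlgHom.commutes, Algebra.commutes]
  | add y z _ _ hy hz => rw [map_add, mul_add, add_mul, hy, hz]
  | mul y z _ _ hy hz => rw [map_mul, ← mul_assoc, hy, mul_assoc, hz, mul_assoc]

theorem mul_ι_eq_ι_mul_involute {v : M} (hv : ∀ u ∈ s, q.IsOrtho v u)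
    (hx : x ∈ Algebra.adjoin R (ι q '' s)) : x * ι q v = ι q v * involute x := by
  rw [ι_mul_eq_involute_mul_ι hv (involute_mem_adjoin_ι hx), involute_involute]

end Orthogonal

local notation "e₀" => ι Q (e 0)
local notation "e∞" => ι Q (e 4)

theorem Bmat_isSymm : Bmat.IsSymm :=
  Matrix.IsSymm.ext fun i j => by fin_cases i <;> fin_cases j <;> rfl

theorem toLinearMap₂'_Bmat_e (i j : Fin 5) :
    Matrix.toLinearMap₂' ℝ Bmat (e i) (e j) = Bmat i j := by
  rw [Matrix.toLinearMap₂'_apply']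
  simp [e]

theorem Q_eq_toQuadraticMap :
    Q = LinearMap.BilinMap.toQuadraticMap (Matrix.toLinearMap₂' ℝ Bmat) := rfl

theorem Q_e (i : Fin 5) : Q (e i) = Bmat i i :=
  toLinearMap₂'_Bmat_e i i

theorem polar_e (i j : Fin 5) : QuadraticMap.polar Q (e i) (e j) = 2 * Bmat i j := by
  rw [Q_eq_toQuadraticMap, LinearMap.BilinMap.polar_toQuadraticMap, toLinearMap₂'_Bmat_e,
    toLinearMap₂'_Bmat_e, Bmat_isSymm.apply i j, two_mul]

theorem isOrtho_e {i j : Fin 5} (h : Bmat i j = 0) : Q.IsOrtho (e i) (e j) := by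
  rw [← QuadraticMap.isOrtho_polarBilin, QuadraticMap.polarBilin_apply_apply, polar_e, h,
    mul_zero]

theorem ι_e_mul_self (i : Fin 5) : ι Q (e i) * ι Q (e i) = algebraMap ℝ _ (Bmat i i) := by
  rw [ι_sq_scalar, Q_e]

theorem ι_e0_mul_self : e₀ * e₀ = 0 := by
  rw [ι_e_mul_self]
  simp [Bmat]

theorem ι_e4_mul_self : e∞ * e∞ = 0 := by
  rw [ι_e_mul_self]
  simp [Bmat]

theorem ι_e4_mul_ι_e0 : e∞ * e₀ = -2 - e₀ * e∞ := by
  rw [eq_sub_iff_add_eq, ι_mul_ι_add_swap, polar_e]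
  simp [Bmat, map_ofNat]

noncomputable def E₃ : Subalgebra ℝ (CliffordAlgebra Q) :=
  Algebra.adjoin ℝ (ι Q '' {e 1, e 2, e 3})

noncomputable def I₃ : CliffordAlgebra Q := ι Q (e 1) * ι Q (e 2) * ι Q (e 3)

theorem isOrtho_e_euclidean {i : Fin 5} (hi : i = 0 ∨ i = 4) :
    ∀ u ∈ ({e 1, e 2, e 3} : Set (Fin 5 → ℝ)), Q.IsOrtho (e i) u := by
  rintro _ (rfl | rfl | rfl) <;> rcases hi with rfl | rfl <;> exact isOrtho_e rfl

section Euclidean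

variable {i : Fin 5} {x : CliffordAlgebra Q}

theorem ι_e_mul_of_mem_E₃ (hi : i = 0 ∨ i = 4) (hx : x ∈ E₃) :
    ι Q (e i) * x = involute x * ι Q (e i) :=
  ι_mul_eq_involute_mul_ι (isOrtho_e_euclidean hi) hx

theorem mul_ι_e_of_mem_E₃ (hi : i = 0 ∨ i = 4) (hx : x ∈ E₃) :
    x * ι Q (e i) = ι Q (e i) * involute x :=
  mul_ι_eq_ι_mul_involute (isOrtho_e_euclidean hi) hx

theorem involute_mem_E₃ (hx : x ∈ E₃) : involute x ∈ E₃ := involute_mem_adjoin_ι hx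

theorem ι_e_mem_E₃ (hi : i = 1 ∨ i = 2 ∨ i = 3) : ι Q (e i) ∈ E₃ := by
  refine ι_mem_adjoin_ι_image ?_
  rcases hi with rfl | rfl | rfl <;> simp

theorem I₃_mem_E₃ : I₃ ∈ E₃ :=
  mul_mem (mul_mem (ι_e_mem_E₃ (by simp)) (ι_e_mem_E₃ (by simp))) (ι_e_mem_E₃ (by simp))

theorem involute_I₃ : involute I₃ = -I₃ := by
  simp [I₃]

theorem I₃_mul_I₃ : I₃ * I₃ = -1 := by
  have h21 := ι_mul_ι_mul_of_isOrtho (h := isOrtho_e (i := 2) (j := 1) rfl)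
  have h31 := ι_mul_ι_mul_of_isOrtho (h := isOrtho_e (i := 3) (j := 1) rfl)
  have h32 := ι_mul_ι_mul_of_isOrtho (h := isOrtho_e (i := 3) (j := 2) rfl)
  simp only [I₃, mul_assoc, h21, h31, h32, mul_neg, neg_neg]
  simp only [← mul_assoc, ι_e_mul_self]
  simp [Bmat]

theorem involute_involute_mul_I₃_mul_I₃ (x : CliffordAlgebra Q) :
    involute (involute x * I₃) * I₃ = x := by
  rw [map_mul, involute_involute, involute_I₃, mul_neg, neg_mul, mul_assoc, I₃_mul_I₃, mul_neg,
    mul_one, neg_neg]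

end Euclidean

theorem wedgeVec_eq_mul_of_mem_adjoin {s : Set (Fin 5 → ℝ)} {v : Fin 5 → ℝ}
    {x : CliffordAlgebra Q} (hv : ∀ u ∈ s, Q.IsOrtho v u)
    (hx : x ∈ Algebra.adjoin ℝ (ι Q '' s)) : wedgeVec x v = x * ι Q v := by
  rw [wedgeVec, ← mul_ι_eq_ι_mul_involute hv hx, ← two_smul ℝ, smul_smul]
  norm_num

theorem wedgeVec_e0_e1_e2_e3 :
    wedgeVec (wedgeVec (wedgeVec e₀ (e 1)) (e 2)) (e 3) = e₀ * I₃ := by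
  have h₁ : wedgeVec e₀ (e 1) = e₀ * ι Q (e 1) :=
    wedgeVec_eq_mul_of_mem_adjoin (s := {e 0}) (by simpa using isOrtho_e rfl)
      (ι_mem_adjoin_ι_image rfl)
  have h₂ : wedgeVec (e₀ * ι Q (e 1)) (e 2) = e₀ * ι Q (e 1) * ι Q (e 2) :=
    wedgeVec_eq_mul_of_mem_adjoin (s := {e 0, e 1})
      (by rintro _ (rfl | rfl) <;> exact isOrtho_e rfl)
      (mul_mem (ι_mem_adjoin_ι_image (by simp)) (ι_mem_adjoin_ι_image (by simp)))
  have h₃ : wedgeVec (e₀ * ι Q (e 1) * ι Q (e 2)) (e 3) = e₀ * ι Q (e 1) * ι Q (e 2) * ι Q (e 3) :=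
    wedgeVec_eq_mul_of_mem_adjoin (s := {e 0, e 1, e 2})
      (by rintro _ (rfl | rfl | rfl) <;> exact isOrtho_e rfl)
      (mul_mem (mul_mem (ι_mem_adjoin_ι_image (by simp)) (ι_mem_adjoin_ι_image (by simp)))
        (ι_mem_adjoin_ι_image (by simp)))
  rw [h₁, h₂, h₃, I₃, mul_assoc, mul_assoc, mul_assoc]

section Components

variable {A₀ A₁ : CliffordAlgebra Q}

theorem wedgeVec_add_e0_mul_e4 (h₀ : A₀ ∈ E₃) (h₁ : A₁ ∈ E₃) :
    wedgeVec (A₀ + e₀ * A₁) (e 4) = (A₀ + e₀ * A₁) * e∞ + involute A₁ := by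
  have c₀ : e∞ * involute A₀ = A₀ * e∞ := by
    rw [ι_e_mul_of_mem_E₃ (.inr rfl) (involute_mem_E₃ h₀), involute_involute]
  have c₁ : e∞ * involute A₁ = A₁ * e∞ := by
    rw [ι_e_mul_of_mem_E₃ (.inr rfl) (involute_mem_E₃ h₁), involute_involute]
  have key : e∞ * involute (A₀ + e₀ * A₁) = (A₀ + e₀ * A₁) * e∞ + (2 : ℝ) • involute A₁ :=
    calc e∞ * involute (A₀ + e₀ * A₁) = e∞ * involute A₀ - e∞ * e₀ * involute A₁ := by
          rw [map_add, map_mul, involute_ι]; noncomm_ring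
      _ = A₀ * e∞ + e₀ * (e∞ * involute A₁) + (2 : ℝ) • involute A₁ := by
          rw [c₀, ι_e4_mul_ι_e0, two_smul]; noncomm_ring
      _ = (A₀ + e₀ * A₁) * e∞ + (2 : ℝ) • involute A₁ := by
          rw [c₁]; noncomm_ring
  rw [wedgeVec, key]
  module

theorem neg_Ic : -Ic = I₃ * (1 + e₀ * e∞) := by
  have hIc : Ic = e₀ * I₃ * e∞ - I₃ := by
    rw [Ic, wedgeVec_e0_e1_e2_e3, ← zero_add (e₀ * I₃),
      wedgeVec_add_e0_mul_e4 (zero_mem _) I₃_mem_E₃, involute_I₃]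
    noncomm_ring
  rw [hIc, ι_e_mul_of_mem_E₃ (.inl rfl) I₃_mem_E₃, involute_I₃]
  noncomm_ring

theorem wedgeVec_add_e0_mul_e4_mul_neg_Ic (h₀ : A₀ ∈ E₃) (h₁ : A₁ ∈ E₃) :
    wedgeVec (A₀ + e₀ * A₁) (e 4) * -Ic = A₀ * I₃ * e∞ + involute A₁ * I₃ := by
  have hI : e∞ * I₃ = -(I₃ * e∞) := by
    rw [ι_e_mul_of_mem_E₃ (.inr rfl) I₃_mem_E₃, involute_I₃, neg_mul]
  have hproj : e∞ * (1 + e₀ * e∞) = -e∞ := by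
    rw [mul_add, mul_one, ← mul_assoc, ι_e4_mul_ι_e0, sub_mul, mul_assoc, ι_e4_mul_self]
    noncomm_ring
  have hswap : involute A₁ * I₃ * e₀ = -(e₀ * A₁ * I₃) := by
    rw [mul_ι_e_of_mem_E₃ (.inl rfl) (mul_mem (involute_mem_E₃ h₁) I₃_mem_E₃), map_mul,
      involute_involute, involute_I₃]
    noncomm_ring
  rw [wedgeVec_add_e0_mul_e4 h₀ h₁, neg_Ic]
  calc ((A₀ + e₀ * A₁) * e∞ + involute A₁) * (I₃ * (1 + e₀ * e∞))
      = (A₀ + e₀ * A₁) * (e∞ * I₃) * (1 + e₀ * e∞) + involute A₁ * I₃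
          + involute A₁ * I₃ * e₀ * e∞ := by noncomm_ring
    _ = -((A₀ + e₀ * A₁) * I₃ * (e∞ * (1 + e₀ * e∞))) + involute A₁ * I₃
          - e₀ * A₁ * I₃ * e∞ := by rw [hI, hswap]; noncomm_ring
    _ = A₀ * I₃ * e∞ + involute A₁ * I₃ := by rw [hproj]; noncomm_ring

end Components

theorem sharpV_e_euclidean {i : Fin 5} (hi : i = 1 ∨ i = 2 ∨ i = 3) : sharpV (e i) = e i := by
  ext j
  rcases hi with rfl | rfl | rfl <;> fin_cases j <;> simp [sharpV, e]

theorem sharpV_e4 : sharpV (e 4) = -e 0 := by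
  ext j
  fin_cases j <;> simp [sharpV, e]

section Sharp

variable {F : CliffordAlgebra Q →ₐ[ℝ] CliffordAlgebra Q}

theorem apply_eq_self_of_mem_E₃ (hF : ∀ v : Fin 5 → ℝ, F (ι Q v) = ι Q (sharpV v))
    {x : CliffordAlgebra Q} (hx : x ∈ E₃) : F x = x := by
  refine AlgHom.adjoin_le_equalizer F (AlgHom.id ℝ _) ?_ hx
  rintro _ ⟨u, hu, rfl⟩
  rcases hu with rfl | rfl | rfl <;> simp [hF, sharpV_e_euclidean]

theorem dualP_add_e0_mul (hF : ∀ v : Fin 5 → ℝ, F (ι Q v) = ι Q (sharpV v))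
    {A₀ A₁ : CliffordAlgebra Q} (h₀ : A₀ ∈ E₃) (h₁ : A₁ ∈ E₃) :
    dualP F (A₀ + e₀ * A₁) = involute A₁ * I₃ + e₀ * (involute A₀ * I₃) := by
  have hB₀ : A₀ * I₃ ∈ E₃ := mul_mem h₀ I₃_mem_E₃
  have hB₁ : involute A₁ * I₃ ∈ E₃ := mul_mem (involute_mem_E₃ h₁) I₃_mem_E₃
  rw [dualP, wedgeVec_add_e0_mul_e4_mul_neg_Ic h₀ h₁, map_add, map_mul,
    apply_eq_self_of_mem_E₃ hF hB₀, apply_eq_self_of_mem_E₃ hF hB₁, hF, sharpV_e4, map_neg,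
    mul_neg, mul_ι_e_of_mem_E₃ (.inl rfl) hB₀, map_mul, involute_I₃]
  noncomm_ring

end Sharp

theorem E₃_le_CGA₀ : E₃ ≤ CGA₀ := by
  refine Algebra.adjoin_le ?_
  rintro _ ⟨u, hu, rfl⟩
  rcases hu with rfl | rfl | rfl <;> exact Algebra.subset_adjoin (by simp)

theorem exists_eq_add_e0_mul_of_mem_CGA₀ {A : CliffordAlgebra Q} (hA : A ∈ CGA₀) :
    ∃ A₀ ∈ E₃, ∃ A₁ ∈ E₃, A = A₀ + e₀ * A₁ := by
  induction hA using Algebra.adjoin_induction with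
  | mem x hx =>
    rcases hx with rfl | rfl | rfl | rfl
    · exact ⟨0, zero_mem _, 1, one_mem _, by simp⟩
    · exact ⟨_, ι_e_mem_E₃ (i := 1) (by simp), 0, zero_mem _, by simp⟩
    · exact ⟨_, ι_e_mem_E₃ (i := 2) (by simp), 0, zero_mem _, by simp⟩
    · exact ⟨_, ι_e_mem_E₃ (i := 3) (by simp), 0, zero_mem _, by simp⟩
  | algebraMap r => exact ⟨algebraMap ℝ _ r, Subalgebra.algebraMap_mem _ r, 0, zero_mem _, by simp⟩
  | add x y _ _ hx hy =>
    obtain ⟨A₀, h₀, A₁, h₁, rfl⟩ := hx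
    obtain ⟨C₀, g₀, C₁, g₁, rfl⟩ := hy
    exact ⟨A₀ + C₀, add_mem h₀ g₀, A₁ + C₁, add_mem h₁ g₁, by noncomm_ring⟩
  | mul x y _ _ hx hy =>
    obtain ⟨A₀, h₀, A₁, h₁, rfl⟩ := hx
    obtain ⟨C₀, g₀, C₁, g₁, rfl⟩ := hy
    refine ⟨A₀ * C₀, mul_mem h₀ g₀, involute A₀ * C₁ + A₁ * C₀,
      add_mem (mul_mem (involute_mem_E₃ h₀) g₁) (mul_mem h₁ g₀), ?_⟩
    calc (A₀ + e₀ * A₁) * (C₀ + e₀ * C₁)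
        = A₀ * C₀ + A₀ * e₀ * C₁ + e₀ * (A₁ * e₀) * C₁ + e₀ * (A₁ * C₀) := by noncomm_ring
      _ = A₀ * C₀ + e₀ * (involute A₀ * C₁ + A₁ * C₀) := by
          rw [mul_ι_e_of_mem_E₃ (.inl rfl) h₀, mul_ι_e_of_mem_E₃ (.inl rfl) h₁, ← mul_assoc e₀ e₀,
            ι_e0_mul_self]
          noncomm_ring

/-- The projective duality `*_P` maps `CGA₀` to itself and is an
involution on it: for every `A ∈ CGA₀`, `A^{*_P} ∈ CGA₀` and `(A^{*_P})^{*_P} = A`. -/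
theorem dualP_involution (F : CliffordAlgebra Q →ₐ[ℝ] CliffordAlgebra Q)
    (hF : ∀ v : Fin 5 → ℝ, F (ι Q v) = ι Q (sharpV v)) :
    ∀ A ∈ CGA₀, dualP F A ∈ CGA₀ ∧ dualP F (dualP F A) = A := by
  intro A hA
  obtain ⟨A₀, h₀, A₁, h₁, rfl⟩ := exists_eq_add_e0_mul_of_mem_CGA₀ hA
  have hB₀ : involute A₁ * I₃ ∈ E₃ := mul_mem (involute_mem_E₃ h₁) I₃_mem_E₃
  have hB₁ : involute A₀ * I₃ ∈ E₃ := mul_mem (involute_mem_E₃ h₀) I₃_mem_E₃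
  rw [dualP_add_e0_mul hF h₀ h₁]
  refine ⟨add_mem (E₃_le_CGA₀ hB₀) (mul_mem (Algebra.subset_adjoin (by simp)) (E₃_le_CGA₀ hB₁)),
    ?_⟩
  rw [dualP_add_e0_mul hF hB₀ hB₁, involute_involute_mul_I₃_mul_I₃,
    involute_involute_mul_I₃_mul_I₃]
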